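/- Let n ≥ 5 and define ω₀(t) = 1/(2 + ln(1/t)) for 0 < t ≤ 1 and ω₀(0) = 0. There exists a smooth function f : ℝⁿ → [0, 1] that is flat at the origin, satisfies f(x) > 0 for all x ≠ 0, is ω₀-monotone, and cannot be written as a finite sum of squares of regular functions: there do not exist N ∈ ℕ, δ > 0, and functions g₁, …, g_N : ℝⁿ → ℝ of class C^{2,δ} with f = Σ_{ℓ=1}^{N} g_ℓ² on ℝⁿ. -/

import Mathlib

noncomputable section

abbrev E (M : ℕ) := EuclideanSpace ℝ (Fin M)

/-- `f` is of class `C^{2,δ}` on `ℝ^n`. -/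
def CHolder {M : ℕ} {F : Type*} [NormedAddCommGroup F] [NormedSpace ℝ F]
    (k : ℕ) (δ : ℝ) (f : E M → F) : Prop :=
  ContDiff ℝ k f ∧ ∃ C : NNReal, HolderWith C δ.toNNReal (iteratedFDeriv ℝ k f)

namespace Stmt19

open Filter Real Set

/-! ### Basic lemmas about `expNegInvGlue` -/

lemma iFD_congr_nhds {n : ℕ} {G F : Type*} [NormedAddCommGroup G] [NormedSpace ℝ G]
    [NormedAddCommGroup F] [NormedSpace ℝ F] {f g : G → F} {x : G} (h : f =ᶠ[nhds x] g) :
    iteratedFDeriv ℝ n f x = iteratedFDeriv ℝ n g x := by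
  rw [← iteratedFDerivWithin_univ, ← iteratedFDerivWithin_univ]
  exact Filter.EventuallyEq.iteratedFDerivWithin_eq (by rwa [nhdsWithin_univ]) h.self_of_nhds n

lemma E_flat (k : ℕ) : iteratedFDeriv ℝ k expNegInvGlue 0 = 0 := by
  have hc : Continuous (iteratedFDeriv ℝ k expNegInvGlue) := by
    apply (expNegInvGlue.contDiff (n := ⊤)).continuous_iteratedFDeriv
    exact_mod_cast le_top
  have hzero : ∀ t : ℝ, t < 0 → iteratedFDeriv ℝ k expNegInvGlue t = 0 := by
    intro t ht
    have h0 : expNegInvGlue =ᶠ[nhds t] (fun _ => (0:ℝ)) :=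
      eventually_of_mem (Iio_mem_nhds ht) (fun s hs => expNegInvGlue.zero_of_nonpos (le_of_lt hs))
    rw [iFD_congr_nhds h0, iteratedFDeriv_zero_fun]; rfl
  have h1 : Tendsto (iteratedFDeriv ℝ k expNegInvGlue) (nhdsWithin 0 (Iio 0))
      (nhds (iteratedFDeriv ℝ k expNegInvGlue 0)) :=
    (hc.tendsto 0).mono_left nhdsWithin_le_nhds
  have h2 : Tendsto (iteratedFDeriv ℝ k expNegInvGlue) (nhdsWithin 0 (Iio 0)) (nhds 0) := by
    apply Tendsto.congr' ?_ tendsto_const_nhds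
    exact (eventually_nhdsWithin_of_forall (fun t ht => (hzero t ht).symm))
  exact tendsto_nhds_unique h1 h2

lemma E_contDiff_k (k : ℕ) : ContDiff ℝ k expNegInvGlue := expNegInvGlue.contDiff

lemma E_mono : Monotone expNegInvGlue := by
  intro a b hab
  rcases le_or_gt a 0 with ha | ha
  · rw [expNegInvGlue.zero_of_nonpos ha]; exact expNegInvGlue.nonneg b
  · have hb : 0 < b := lt_of_lt_of_le ha hab
    simp only [expNegInvGlue, if_neg (not_le.2 ha), if_neg (not_le.2 hb)]
    apply Real.exp_le_exp.2
    simp only [neg_le_neg_iff]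
    exact inv_anti₀ ha hab

lemma E_le_one (t : ℝ) : expNegInvGlue t ≤ 1 := by
  rcases le_or_gt t 0 with h | h
  · rw [expNegInvGlue.zero_of_nonpos h]; norm_num
  · simp only [expNegInvGlue, if_neg (not_le.2 h)]
    rw [show (1:ℝ) = Real.exp 0 by simp]
    apply Real.exp_le_exp.2
    simp [le_of_lt h, inv_nonneg]

lemma E_le_self {t : ℝ} (ht : 0 ≤ t) : expNegInvGlue t ≤ t := by
  rcases eq_or_lt_of_le ht with h | h
  · rw [← h, expNegInvGlue.zero]
  · simp only [expNegInvGlue, if_neg (not_le.2 h)]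
    have h1 : t⁻¹ + 1 ≤ Real.exp t⁻¹ := Real.add_one_le_exp t⁻¹
    rw [Real.exp_neg]
    rw [inv_le_comm₀ (Real.exp_pos _) h]
    calc (t:ℝ)⁻¹ ≤ t⁻¹ + 1 := by linarith
    _ ≤ Real.exp t⁻¹ := h1

lemma E_one : expNegInvGlue 1 = Real.exp (-1) := by
  simp [expNegInvGlue]

lemma E_pos_eq {t : ℝ} (h : 0 < t) : expNegInvGlue t = Real.exp (-t⁻¹) := by
  simp [expNegInvGlue, not_le.2 h]

/-! ### The function `f0` -/

variable (n : ℕ)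

def f0 (x : E n) : ℝ := (∑ i : Fin n, (expNegInvGlue (x i) + expNegInvGlue (-(x i)))) / (4*n)

lemma f0_smooth : ContDiff ℝ (⊤:ℕ∞) (f0 n) := by
  apply ContDiff.div_const
  apply ContDiff.sum
  intro i _
  exact (expNegInvGlue.contDiff.comp (EuclideanSpace.proj i).contDiff).add
    (expNegInvGlue.contDiff.comp (-(EuclideanSpace.proj i) : E n →L[ℝ] ℝ).contDiff)

lemma f0_nonneg (x : E n) : 0 ≤ f0 n x := by
  apply div_nonneg _ (by positivity)
  exact Finset.sum_nonneg fun i _ => add_nonneg (expNegInvGlue.nonneg _) (expNegInvGlue.nonneg _)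

lemma term_flat (k : ℕ) (L : E n →L[ℝ] ℝ) :
    iteratedFDeriv ℝ k (fun x => expNegInvGlue (L x)) 0 = 0 := by
  have h : (fun x : E n => expNegInvGlue (L x)) = expNegInvGlue ∘ L := rfl
  rw [h, ContinuousLinearMap.iteratedFDeriv_comp_right L (E_contDiff_k k) 0 le_rfl,
    map_zero, E_flat]
  ext m
  simp [ContinuousMultilinearMap.compContinuousLinearMap_apply]

def gi (i : Fin n) : E n → ℝ := fun y => expNegInvGlue (y i) + expNegInvGlue (-(y i))

lemma gi_contDiff (k : ℕ) (i : Fin n) : ContDiff ℝ k (gi n i) :=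
  ((E_contDiff_k k).comp (EuclideanSpace.proj i).contDiff).add
    ((E_contDiff_k k).comp (-(EuclideanSpace.proj i) : E n →L[ℝ] ℝ).contDiff)

lemma gi_flat (k : ℕ) (i : Fin n) : iteratedFDeriv ℝ k (gi n i) 0 = 0 := by
  have hf : ContDiff ℝ (k:ℕ) (fun z : E n => expNegInvGlue ((EuclideanSpace.proj i : E n →L[ℝ] ℝ) z)) :=
    (E_contDiff_k k).comp (EuclideanSpace.proj i : E n →L[ℝ] ℝ).contDiff
  have hg : ContDiff ℝ (k:ℕ) (fun z : E n => expNegInvGlue ((-(EuclideanSpace.proj i) : E n →L[ℝ] ℝ) z)) :=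
    (E_contDiff_k k).comp (-(EuclideanSpace.proj i) : E n →L[ℝ] ℝ).contDiff
  have h : iteratedFDeriv ℝ k (fun y : E n =>
      (fun z : E n => expNegInvGlue ((EuclideanSpace.proj i : E n →L[ℝ] ℝ) z)) y
      + (fun z : E n => expNegInvGlue ((-(EuclideanSpace.proj i) : E n →L[ℝ] ℝ) z)) y) 0 = 0 := by
    rw [iteratedFDeriv_add_apply' hf.contDiffAt hg.contDiffAt, term_flat, term_flat]
    simp
  exact h

lemma f0_flat (k : ℕ) : iteratedFDeriv ℝ k (f0 n) 0 = 0 := by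
  have hS : (∑ i : Fin n, gi n i) = (fun x => ∑ i : Fin n, gi n i x) := by
    funext x; exact Finset.sum_apply x Finset.univ _
  have hf0 : f0 n = ((4*(n:ℝ)))⁻¹ • (∑ i : Fin n, gi n i) := by
    funext x
    simp only [Pi.smul_apply, hS, smul_eq_mul, f0, gi, div_eq_inv_mul]
  rw [hf0, iteratedFDeriv_const_smul_apply]
  · rw [hS, iteratedFDeriv_sum (fun i _ => gi_contDiff n k i)]
    rw [Finset.sum_apply, Finset.sum_congr rfl (fun i _ => gi_flat n k i)]
    simp
  · rw [hS]; exact (ContDiff.sum (fun i _ => gi_contDiff n k i)).contDiffAt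

lemma coord_le_norm (x : E n) (i : Fin n) : |x i| ≤ ‖x‖ := by
  have h1 : ‖x‖ = Real.sqrt (∑ j, ‖x j‖^2) := EuclideanSpace.norm_eq x
  rw [h1]
  have h2 : |x i| = Real.sqrt (‖x i‖^2) := by
    rw [Real.sqrt_sq_eq_abs]; simp
  rw [h2]
  apply Real.sqrt_le_sqrt
  apply Finset.single_le_sum (f := fun j => ‖x j‖^2) (fun j _ => by positivity) (Finset.mem_univ i)

lemma exists_big_coord (hn : 0 < n) (x : E n) : ∃ i : Fin n, ‖x‖ ≤ Real.sqrt n * |x i| := by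
  have hne : (Finset.univ : Finset (Fin n)).Nonempty :=
    Finset.univ_nonempty_iff.2 (Fin.pos_iff_nonempty.1 hn)
  obtain ⟨i, _, hi⟩ := Finset.exists_max_image Finset.univ (fun j => |x j|) hne
  refine ⟨i, ?_⟩
  have h1 : ‖x‖^2 = ∑ j, ‖x j‖^2 := by
    rw [EuclideanSpace.norm_eq, Real.sq_sqrt]
    positivity
  have h2 : ∑ j, ‖x j‖^2 ≤ (n:ℝ) * |x i|^2 := by
    calc ∑ j, ‖x j‖^2 ≤ ∑ _j : Fin n, |x i|^2 := by
          apply Finset.sum_le_sum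
          intro j _
          rw [Real.norm_eq_abs]
          exact pow_le_pow_left₀ (abs_nonneg _) (hi j (Finset.mem_univ j)) 2
    _ = (n:ℝ) * |x i|^2 := by
          rw [Finset.sum_const, Finset.card_univ, Fintype.card_fin, nsmul_eq_mul]
  have h3 : ‖x‖^2 ≤ (Real.sqrt n * |x i|)^2 := by
    rw [mul_pow, Real.sq_sqrt (by positivity : (0:ℝ) ≤ (n:ℝ))]
    linarith
  have h4 : (0:ℝ) ≤ Real.sqrt n * |x i| := by positivity
  nlinarith [norm_nonneg x]

lemma f0_zero : f0 n 0 = 0 := by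
  simp [f0, expNegInvGlue.zero]

lemma f0_le_half (hn : 0 < n) (x : E n) : f0 n x ≤ 1/2 := by
  rw [f0, div_le_iff₀ (by positivity)]
  calc (∑ i : Fin n, (expNegInvGlue (x i) + expNegInvGlue (-(x i))))
      ≤ ∑ _i : Fin n, (2:ℝ) := by
        apply Finset.sum_le_sum
        intro i _
        have := E_le_one (x i); have := E_le_one (-(x i)); linarith
  _ = 2*n := by simp [Finset.sum_const, mul_comm]
  _ ≤ 1/2 * (4*n) := by
        have : (1:ℝ) ≤ (n:ℝ) := by exact_mod_cast hn
        ring_nf; linarith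

lemma f0_pos (hn : 0 < n) {x : E n} (hx : x ≠ 0) : 0 < f0 n x := by
  rw [f0]
  apply div_pos _ (by positivity)
  have hax : ∃ i, x i ≠ 0 := by
    by_contra hc
    push_neg at hc
    exact hx (by ext i; exact hc i)
  obtain ⟨i, hi⟩ := hax
  apply Finset.sum_pos' (fun j _ => add_nonneg (expNegInvGlue.nonneg _) (expNegInvGlue.nonneg _))
  refine ⟨i, Finset.mem_univ i, ?_⟩
  rcases lt_or_gt_of_ne hi with h | h
  · have := expNegInvGlue.pos_of_pos (show 0 < -(x i) by linarith)
    have := expNegInvGlue.nonneg (x i)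
    linarith
  · have := expNegInvGlue.pos_of_pos h
    have := expNegInvGlue.nonneg (-(x i))
    linarith

lemma f0_le_norm_half (hn : 0 < n) (x : E n) : f0 n x ≤ ‖x‖/2 := by
  rw [f0, div_le_iff₀ (by positivity)]
  have hterm : ∀ i : Fin n, expNegInvGlue (x i) + expNegInvGlue (-(x i)) ≤ 2*‖x‖ := by
    intro i
    have h1 : expNegInvGlue (x i) ≤ ‖x‖ := by
      calc expNegInvGlue (x i) ≤ expNegInvGlue ‖x‖ :=
            E_mono ((le_abs_self _).trans (coord_le_norm n x i))
      _ ≤ ‖x‖ := E_le_self (norm_nonneg x)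
    have h2 : expNegInvGlue (-(x i)) ≤ ‖x‖ := by
      calc expNegInvGlue (-(x i)) ≤ expNegInvGlue ‖x‖ :=
            E_mono ((neg_le_abs _).trans (coord_le_norm n x i))
      _ ≤ ‖x‖ := E_le_self (norm_nonneg x)
    linarith
  calc (∑ i : Fin n, (expNegInvGlue (x i) + expNegInvGlue (-(x i))))
      ≤ ∑ _i : Fin n, 2*‖x‖ := Finset.sum_le_sum (fun i _ => hterm i)
  _ = (n:ℝ) * (2*‖x‖) := by simp [Finset.sum_const]
  _ ≤ ‖x‖/2 * (4*n) := by ring_nf; nlinarith [norm_nonneg x, Nat.cast_nonneg n (α := ℝ)]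

lemma f0_lower (hn : 0 < n) (x : E n) :
    expNegInvGlue (‖x‖ / Real.sqrt n) / (4*n) ≤ f0 n x := by
  obtain ⟨i, hi⟩ := exists_big_coord n hn x
  have hsq : (0:ℝ) < Real.sqrt n := Real.sqrt_pos.2 (by exact_mod_cast hn)
  have h1 : ‖x‖ / Real.sqrt n ≤ |x i| := by
    rw [div_le_iff₀ hsq]
    linarith [hi, mul_comm (Real.sqrt n) (|x i|)]
  have h2 : expNegInvGlue (‖x‖ / Real.sqrt n) ≤ expNegInvGlue (x i) + expNegInvGlue (-(x i)) := by
    rcases le_or_gt 0 (x i) with h | h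
    · have : expNegInvGlue (‖x‖ / Real.sqrt n) ≤ expNegInvGlue (x i) :=
        E_mono (h1.trans_eq (abs_of_nonneg h))
      linarith [expNegInvGlue.nonneg (-(x i))]
    · have : expNegInvGlue (‖x‖ / Real.sqrt n) ≤ expNegInvGlue (-(x i)) :=
        E_mono (h1.trans_eq (abs_of_neg h))
      linarith [expNegInvGlue.nonneg (x i)]
  have h3 : expNegInvGlue (x i) + expNegInvGlue (-(x i))
      ≤ ∑ j : Fin n, (expNegInvGlue (x j) + expNegInvGlue (-(x j))) :=
    Finset.single_le_sum (f := fun j => expNegInvGlue (x j) + expNegInvGlue (-(x j)))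
      (fun j _ => add_nonneg (expNegInvGlue.nonneg _) (expNegInvGlue.nonneg _)) (Finset.mem_univ i)
  rw [f0]
  have hd : (0:ℝ) < 4*n := by
    have : (1:ℝ) ≤ (n:ℝ) := by exact_mod_cast hn
    linarith
  have := (div_le_div_iff_of_pos_right hd).2 (h2.trans h3)
  exact this


lemma f0_single (i0 : Fin n) {s : ℝ} (hs : 0 ≤ s) :
    f0 n (s • (EuclideanSpace.single i0 (1:ℝ))) = expNegInvGlue s / (4*n) := by
  rw [f0]
  congr 1
  have hcoord : ∀ i : Fin n, (s • (EuclideanSpace.single i0 (1:ℝ))) i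
      = if i = i0 then s else 0 := by
    intro i
    rw [PiLp.smul_apply, EuclideanSpace.single_apply]
    by_cases h : i = i0 <;> simp [h]
  rw [Finset.sum_eq_single_of_mem i0 (Finset.mem_univ i0)]
  · rw [hcoord i0]
    simp [expNegInvGlue.zero_of_nonpos (show -s ≤ 0 by linarith)]
  · intro j _ hj
    rw [hcoord j, if_neg hj]
    simp [expNegInvGlue.zero]

/-! ### The spike functions -/

def eps (m : ℕ) : ℝ := (1/2)^(m+3)
def cc (m : ℕ) : ℝ := 2^(m+3) * Real.exp (((m:ℝ)+1)^2)
def vm (m : ℕ) (x : E n) : ℝ := eps m * expNegInvGlue (cc m * (‖x‖^2 - ((m:ℝ)+1)^2))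
def vv (x : E n) : ℝ := ∑' m, vm n m x

lemma eps_pos (m : ℕ) : 0 < eps m := by rw [eps]; positivity
lemma cc_pos (m : ℕ) : 0 < cc m := by rw [cc]; positivity

lemma eps_mul_cc (m : ℕ) : eps m * cc m = Real.exp (((m:ℝ)+1)^2) := by
  rw [eps, cc]
  rw [show ((1:ℝ)/2)^(m+3) = ((2:ℝ)^(m+3))⁻¹ by rw [one_div, inv_pow]]
  field_simp

lemma summable_eps : Summable eps := by
  have : eps = fun m => (1/8 : ℝ) * (1/2)^m := by
    funext m; rw [eps, pow_add]; ring
  rw [this]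
  exact summable_geometric_two.mul_left _

lemma vm_nonneg (m : ℕ) (x : E n) : 0 ≤ vm n m x :=
  mul_nonneg (eps_pos m).le (expNegInvGlue.nonneg _)

lemma vm_le_eps (m : ℕ) (x : E n) : vm n m x ≤ eps m := by
  rw [vm]
  calc eps m * expNegInvGlue _ ≤ eps m * 1 :=
        mul_le_mul_of_nonneg_left (E_le_one _) (eps_pos m).le
  _ = eps m := mul_one _

lemma vm_summable (x : E n) : Summable (fun m => vm n m x) :=
  Summable.of_nonneg_of_le (fun m => vm_nonneg n m x) (fun m => vm_le_eps n m x) summable_eps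

lemma vm_mono (m : ℕ) {x y : E n} (h : ‖y‖ ≤ ‖x‖) : vm n m y ≤ vm n m x := by
  apply mul_le_mul_of_nonneg_left _ (eps_pos m).le
  apply E_mono
  have h2 : ‖y‖^2 ≤ ‖x‖^2 := pow_le_pow_left₀ (norm_nonneg _) h 2
  nlinarith [cc_pos m]

lemma vm_zero_of_le (m : ℕ) {x : E n} (h : ‖x‖ ≤ (m:ℝ)+1) : vm n m x = 0 := by
  rw [vm, expNegInvGlue.zero_of_nonpos, mul_zero]
  have h2 : ‖x‖^2 ≤ ((m:ℝ)+1)^2 := pow_le_pow_left₀ (norm_nonneg _) h 2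
  nlinarith [cc_pos m]

lemma vm_smooth (m : ℕ) : ContDiff ℝ (⊤:ℕ∞) (vm n m) := by
  apply ContDiff.mul contDiff_const
  apply expNegInvGlue.contDiff.comp
  exact contDiff_const.mul ((contDiff_norm_sq ℝ).sub contDiff_const)

lemma vv_nonneg (x : E n) : 0 ≤ vv n x := tsum_nonneg (fun m => vm_nonneg n m x)

lemma vv_le (x : E n) : vv n x ≤ 1/4 := by
  have h1 : vv n x ≤ ∑' m, eps m :=
    Summable.tsum_le_tsum (fun m => vm_le_eps n m x) (vm_summable n x) summable_eps
  have h2 : ∑' m, eps m = 1/4 := by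
    have : eps = fun m => (1/8 : ℝ) * (1/2)^m := by
      funext m; rw [eps, pow_add]; ring
    rw [this, tsum_mul_left, tsum_geometric_two]
    norm_num
  linarith

lemma vv_mono {x y : E n} (h : ‖y‖ ≤ ‖x‖) : vv n y ≤ vv n x :=
  Summable.tsum_le_tsum (fun m => vm_mono n m h) (vm_summable n y) (vm_summable n x)

lemma vv_zero_of_le_one {x : E n} (h : ‖x‖ ≤ 1) : vv n x = 0 := by
  rw [vv]
  have : ∀ m : ℕ, vm n m x = 0 := by
    intro m
    apply vm_zero_of_le
    have : (0:ℝ) ≤ (m:ℝ) := Nat.cast_nonneg m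
    linarith
  rw [tsum_congr this, tsum_zero]

lemma vv_eq_sum_of_lt {x : E n} {M : ℕ} (h : ‖x‖ < M) :
    vv n x = ∑ m ∈ Finset.range M, vm n m x := by
  apply tsum_eq_sum
  intro m hm
  apply vm_zero_of_le
  have : (M:ℝ) ≤ (m:ℝ) := by
    exact_mod_cast Nat.le_of_not_lt (fun hc => hm (Finset.mem_range.2 hc))
  linarith

lemma vv_smooth : ContDiff ℝ (⊤:ℕ∞) (vv n) := by
  rw [contDiff_iff_contDiffAt]
  intro x
  obtain ⟨M, hM⟩ := exists_nat_gt (‖x‖ + 1)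
  have hsmooth : ContDiffAt ℝ (⊤:ℕ∞) (fun y => ∑ m ∈ Finset.range M, vm n m y) x := by
    apply ContDiffAt.sum
    intro m _
    exact (vm_smooth n m).contDiffAt
  apply hsmooth.congr_of_eventuallyEq
  apply eventually_of_mem (Metric.ball_mem_nhds x one_pos)
  intro y hy
  apply vv_eq_sum_of_lt
  have : ‖y‖ < ‖x‖ + 1 := by
    calc ‖y‖ = ‖x + (y - x)‖ := by rw [add_sub_cancel]
    _ ≤ ‖x‖ + ‖y - x‖ := norm_add_le _ _
    _ < ‖x‖ + 1 := by
        have := Metric.mem_ball.1 hy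
        rw [dist_eq_norm] at this
        linarith
  linarith

/-! ### The function `ff` -/

def ff (x : E n) : ℝ := f0 n x + vv n x

lemma ff_smooth : ContDiff ℝ (⊤:ℕ∞) (ff n) := (f0_smooth n).add (vv_smooth n)

lemma ff_nonneg (x : E n) : 0 ≤ ff n x := add_nonneg (f0_nonneg n x) (vv_nonneg n x)

lemma ff_le_one (hn : 0 < n) (x : E n) : ff n x ≤ 1 := by
  have := f0_le_half n hn x; have := vv_le n x; rw [ff]; linarith

lemma ff_pos (hn : 0 < n) {x : E n} (hx : x ≠ 0) : 0 < ff n x :=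
  add_pos_of_pos_of_nonneg (f0_pos n hn hx) (vv_nonneg n x)

lemma contDiff_nat_of_top {F' : Type*} [NormedAddCommGroup F'] [NormedSpace ℝ F']
    {f : F' → ℝ} (h : ContDiff ℝ (⊤:ℕ∞) f) (k : ℕ) : ContDiff ℝ k f :=
  h.of_le (by exact_mod_cast le_top)

lemma ff_flat (k : ℕ) : iteratedFDeriv ℝ k (ff n) 0 = 0 := by
  have hff : ff n = fun x => f0 n x + vv n x := rfl
  rw [hff, iteratedFDeriv_add_apply' (contDiff_nat_of_top (f0_smooth n) k).contDiffAt
    (contDiff_nat_of_top (vv_smooth n) k).contDiffAt, f0_flat]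
  have hv : iteratedFDeriv ℝ k (vv n) 0 = 0 := by
    have h0 : vv n =ᶠ[nhds (0 : E n)] (fun _ => (0:ℝ)) := by
      apply eventually_of_mem (Metric.ball_mem_nhds (0 : E n) one_pos)
      intro y hy
      apply vv_zero_of_le_one
      have := Metric.mem_ball.1 hy
      rw [dist_eq_norm, sub_zero] at this
      linarith
    rw [iFD_congr_nhds h0, iteratedFDeriv_zero_fun]; rfl
  rw [hv]; simp

/-! ### The `ω`-monotonicity -/

def Kn : ℝ := 2 + Real.log (4*n) + Real.sqrt n

lemma Kn_ge_two (hn : 0 < n) : 2 ≤ Kn n := by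
  rw [Kn]
  have h1 : (0:ℝ) ≤ Real.log (4*n) := by
    apply Real.log_nonneg
    have : (1:ℝ) ≤ (n:ℝ) := by exact_mod_cast hn
    linarith
  have h2 : (0:ℝ) ≤ Real.sqrt n := Real.sqrt_nonneg _
  linarith

lemma ff_omega (hn : 0 < n) (x y : E n) (hxy : ‖y - (1/2:ℝ) • x‖ < ‖x‖/2) :
    ff n y ≤ (Kn n)^2 * (1/(2 + Real.log (1/ff n x))) := by
  have hxpos : 0 < ‖x‖ := by
    by_contra hc
    push_neg at hc
    have : ‖x‖ = 0 := le_antisymm hc (norm_nonneg x)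
    rw [this] at hxy
    simp at hxy
    linarith [norm_nonneg (y - (1/2:ℝ) • x), hxy]
  have hxne : x ≠ 0 := by
    intro hc; rw [hc] at hxpos; simp at hxpos
  have hyx : ‖y‖ < ‖x‖ := by
    calc ‖y‖ = ‖(y - (1/2:ℝ) • x) + (1/2:ℝ) • x‖ := by rw [sub_add_cancel]
    _ ≤ ‖y - (1/2:ℝ) • x‖ + ‖(1/2:ℝ) • x‖ := norm_add_le _ _
    _ < ‖x‖/2 + ‖x‖/2 := by
        apply add_lt_add_of_lt_of_le hxy
        rw [norm_smul, Real.norm_eq_abs, abs_of_nonneg (by norm_num : (0:ℝ) ≤ 1/2)]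
        linarith
    _ = ‖x‖ := by ring
  have hfx_pos : 0 < ff n x := ff_pos n hn hxne
  have hfx_le_one : ff n x ≤ 1 := ff_le_one n hn x
  have hlog_nonneg : 0 ≤ Real.log (1/ff n x) := by
    apply Real.log_nonneg
    rw [le_div_iff₀ hfx_pos]; linarith
  have hKn := Kn_ge_two n hn
  have hsq : (0:ℝ) < Real.sqrt n := Real.sqrt_pos.2 (by exact_mod_cast hn)
  have h4n : (1:ℝ) ≤ 4*n := by
    have : (1:ℝ) ≤ (n:ℝ) := by exact_mod_cast hn
    linarith
  -- lower bound on ff x in terms of log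
  have hlower : Real.exp (-(Real.sqrt n / ‖x‖)) / (4*n) ≤ ff n x := by
    have h1 : expNegInvGlue (‖x‖ / Real.sqrt n) = Real.exp (-(Real.sqrt n / ‖x‖)) := by
      rw [E_pos_eq (div_pos hxpos hsq), inv_div]
    calc Real.exp (-(Real.sqrt n / ‖x‖)) / (4*n)
        = expNegInvGlue (‖x‖ / Real.sqrt n) / (4*n) := by rw [h1]
    _ ≤ f0 n x := f0_lower n hn x
    _ ≤ ff n x := by rw [ff]; linarith [vv_nonneg n x]
  have hlog_le : Real.log (1/ff n x) ≤ Real.sqrt n / ‖x‖ + Real.log (4*n) := by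
    rw [one_div, Real.log_inv]
    have h2 : Real.log (Real.exp (-(Real.sqrt n / ‖x‖)) / (4*n)) ≤ Real.log (ff n x) :=
      Real.log_le_log (by positivity) hlower
    rw [Real.log_div (Real.exp_ne_zero _) (by positivity), Real.log_exp] at h2
    linarith
  rcases le_or_gt ‖x‖ 1 with hcase | hcase
  · -- small x
    have hffy : ff n y ≤ ‖x‖/2 := by
      have h1 : vv n y = 0 := vv_zero_of_le_one n (by linarith)
      have h2 : f0 n y ≤ ‖y‖/2 := f0_le_norm_half n hn y
      rw [ff, h1]; linarith
    have hden : 2 + Real.log (1/ff n x) ≤ Kn n / ‖x‖ := by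
      rw [le_div_iff₀ hxpos]
      have expand : (2 + (Real.sqrt n / ‖x‖ + Real.log (4*n))) * ‖x‖
          = 2*‖x‖ + Real.sqrt n + Real.log (4*n)*‖x‖ := by
        field_simp; ring
      have hlog4n : (0:ℝ) ≤ Real.log (4*n) := Real.log_nonneg h4n
      have hstep : (2 + Real.log (1/ff n x)) * ‖x‖
          ≤ (2 + (Real.sqrt n / ‖x‖ + Real.log (4*n))) * ‖x‖ :=
        mul_le_mul_of_nonneg_right (by linarith) (norm_nonneg x)
      rw [expand] at hstep
      rw [Kn]
      nlinarith [hstep]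
    have hrecip : ‖x‖ / Kn n ≤ 1/(2 + Real.log (1/ff n x)) := by
      rw [div_le_div_iff₀ (by positivity) (by linarith)]
      calc ‖x‖ * (2 + Real.log (1/ff n x)) ≤ ‖x‖ * (Kn n / ‖x‖) :=
            mul_le_mul_of_nonneg_left hden (norm_nonneg x)
      _ = Kn n := by field_simp
      _ = 1 * Kn n := (one_mul _).symm
    calc ff n y ≤ ‖x‖/2 := hffy
    _ ≤ Kn n * ‖x‖ := by nlinarith
    _ = (Kn n)^2 * (‖x‖ / Kn n) := by field_simp
    _ ≤ (Kn n)^2 * (1/(2 + Real.log (1/ff n x))) := by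
        apply mul_le_mul_of_nonneg_left hrecip (by positivity)
  · -- big x
    have hden : 2 + Real.log (1/ff n x) ≤ Kn n := by
      have h1 : Real.sqrt n / ‖x‖ ≤ Real.sqrt n := by
        rw [div_le_iff₀ hxpos]
        nlinarith
      rw [Kn]; linarith [hlog_le]
    have hrecip : 1 / Kn n ≤ 1/(2 + Real.log (1/ff n x)) :=
      one_div_le_one_div_of_le (by linarith) hden
    calc ff n y ≤ 1 := ff_le_one n hn y
    _ ≤ Kn n := by linarith
    _ = (Kn n)^2 * (1 / Kn n) := by field_simp
    _ ≤ (Kn n)^2 * (1/(2 + Real.log (1/ff n x))) := by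
        apply mul_le_mul_of_nonneg_left hrecip (by positivity)

end Stmt19

open Stmt19 Filter Real Set in
set_option maxHeartbeats 2000000 in
theorem stmt_19 {n : ℕ} (hn : 5 ≤ n) :
    ∃ f : E n → ℝ, ContDiff ℝ (⊤ : ℕ∞) f ∧ (∀ x, 0 ≤ f x ∧ f x ≤ 1) ∧
      (∀ k : ℕ, iteratedFDeriv ℝ k f 0 = 0) ∧
      (∀ x : E n, x ≠ 0 → 0 < f x) ∧
      (∃ C : ℝ, 0 < C ∧ ∀ x y : E n, ‖y - (1 / 2 : ℝ) • x‖ < ‖x‖ / 2 →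
        f y ≤ C * (1 / (2 + Real.log (1 / f x)))) ∧
      ¬ ∃ (N : ℕ) (δ : ℝ) (g : Fin N → E n → ℝ), 0 < δ ∧
          (∀ ℓ, CHolder 2 δ (g ℓ)) ∧ ∀ x, f x = ∑ ℓ, g ℓ x ^ 2 := by
  have hn0 : 0 < n := by omega
  refine ⟨ff n, ff_smooth n, fun x => ⟨ff_nonneg n x, ff_le_one n hn0 x⟩, ff_flat n,
    fun x hx => ff_pos n hn0 hx, ⟨(Kn n)^2, by nlinarith [Kn_ge_two n hn0],
      fun x y h => ff_omega n hn0 x y (by simpa using h)⟩, ?_⟩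
  rintro ⟨N, δ, g, hδ, hg, hsum⟩
  -- setup
  set i0 : Fin n := ⟨0, by omega⟩ with hi0_def
  set e : E n := EuclideanSpace.single i0 (1:ℝ) with he_def
  have he : ‖e‖ = 1 := by rw [he_def, EuclideanSpace.norm_single]; norm_num
  set lam : ℝ →L[ℝ] E n := ContinuousLinearMap.toSpanSingleton ℝ e with hlam_def
  have hlam_apply : ∀ t : ℝ, lam t = t • e := fun t =>
    ContinuousLinearMap.toSpanSingleton_apply ℝ e t
  have hnorm_smul : ∀ t : ℝ, 0 ≤ t → ‖t • e‖ = t := by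
    intro t ht
    rw [norm_smul, he, Real.norm_eq_abs, abs_of_nonneg ht, mul_one]
  choose C hC using fun ℓ => (hg ℓ).2
  set δ' : ℝ := (δ.toNNReal : ℝ) with hδ'_def
  have hδ'0 : 0 ≤ δ' := NNReal.coe_nonneg _
  set A : Fin N → ℝ := fun ℓ => ‖iteratedFDeriv ℝ 2 (g ℓ) 0‖ with hA_def
  set α : ℝ := ∑ ℓ, (2*(2 + A ℓ)) with hα_def
  set β : ℝ := ∑ ℓ, (2*(C ℓ : ℝ)) with hβ_def
  have hα0 : 0 ≤ α := Finset.sum_nonneg (fun ℓ _ => by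
    have : (0:ℝ) ≤ A ℓ := norm_nonneg _
    linarith)
  have hβ0 : 0 ≤ β := Finset.sum_nonneg (fun ℓ _ => by positivity)
  set F : ℝ → ℝ := fun t => ff n (t • e) with hF_def
  have hFcomp : F = (ff n) ∘ lam := by
    funext t; rw [hF_def]; simp [hlam_apply]
  have hFsm : ContDiff ℝ (⊤:ℕ∞) F := by
    rw [hFcomp]; exact (ff_smooth n).comp lam.contDiff
  have hFdiffable : Differentiable ℝ F := hFsm.differentiable (by simp)
  have hGsm : ∀ ℓ, ContDiff ℝ (2:ℕ) ((g ℓ) ∘ lam) := fun ℓ => (hg ℓ).1.comp lam.contDiff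
  have hGdiffable : ∀ ℓ, Differentiable ℝ ((g ℓ) ∘ lam) := fun ℓ =>
    (hGsm ℓ).differentiable (by simp)
  have hG'sm : ∀ ℓ, ContDiff ℝ (1:ℕ) (deriv ((g ℓ) ∘ lam)) := by
    intro ℓ
    have h2 : ContDiff ℝ ((1:ℕ) + 1 : ℕ) ((g ℓ) ∘ lam) := hGsm ℓ
    have h3 : ContDiff ℝ (((1:ℕ) : WithTop ℕ∞) + 1) ((g ℓ) ∘ lam) := by exact_mod_cast h2
    exact (contDiff_succ_iff_deriv.1 h3).2.2
  have hG'diffable : ∀ ℓ, Differentiable ℝ (deriv ((g ℓ) ∘ lam)) := fun ℓ =>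
    (hG'sm ℓ).differentiable (by simp)
  -- |g ℓ (lam s)| ≤ 1
  have hG1 : ∀ ℓ (s : ℝ), |g ℓ (lam s)| ≤ 1 := by
    intro ℓ s
    have h1 := hsum (lam s)
    have h2 : (g ℓ (lam s))^2 ≤ ∑ ℓ', g ℓ' (lam s) ^ 2 :=
      Finset.single_le_sum (f := fun ℓ' => g ℓ' (lam s)^2)
        (fun _ _ => sq_nonneg _) (Finset.mem_univ ℓ)
    have h3 : ff n (lam s) ≤ 1 := ff_le_one n hn0 (lam s)
    have h4 : (g ℓ (lam s))^2 ≤ 1 := by linarith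
    nlinarith [sq_abs (g ℓ (lam s)), abs_nonneg (g ℓ (lam s))]
  -- second derivative bound
  have hG''bound : ∀ ℓ (s : ℝ), 0 ≤ s →
      |deriv (deriv ((g ℓ) ∘ lam)) s| ≤ A ℓ + (C ℓ : ℝ) * s ^ δ' := by
    intro ℓ s hs
    have h2 : deriv (deriv ((g ℓ) ∘ lam)) s = iteratedDeriv 2 ((g ℓ) ∘ lam) s := by
      rw [iteratedDeriv_succ, iteratedDeriv_one]
    rw [h2, iteratedDeriv_eq_iteratedFDeriv,
      ContinuousLinearMap.iteratedFDeriv_comp_right lam (hg ℓ).1 s le_rfl]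
    have happ : (iteratedFDeriv ℝ 2 (g ℓ) (lam s)).compContinuousLinearMap (fun _ => lam)
        (fun _ => 1) = iteratedFDeriv ℝ 2 (g ℓ) (lam s) (fun _ => e) := by
      rw [ContinuousMultilinearMap.compContinuousLinearMap_apply]
      congr 1
      funext j
      rw [hlam_apply, one_smul]
    rw [happ]
    have hTnorm : |iteratedFDeriv ℝ 2 (g ℓ) (lam s) (fun _ => e)|
        ≤ ‖iteratedFDeriv ℝ 2 (g ℓ) (lam s)‖ := by
      have h5 := (iteratedFDeriv ℝ 2 (g ℓ) (lam s)).le_opNorm (fun _ => e)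
      rw [← Real.norm_eq_abs]
      calc ‖iteratedFDeriv ℝ 2 (g ℓ) (lam s) (fun _ => e)‖
          ≤ ‖iteratedFDeriv ℝ 2 (g ℓ) (lam s)‖ * ∏ _i : Fin 2, ‖e‖ := h5
      _ = ‖iteratedFDeriv ℝ 2 (g ℓ) (lam s)‖ := by rw [he]; simp
    have hHold : ‖iteratedFDeriv ℝ 2 (g ℓ) (lam s)‖ ≤ A ℓ + (C ℓ : ℝ) * s ^ δ' := by
      have hd := (hC ℓ).dist_le (lam s) 0
      have hdist : dist (lam s) 0 = s := by
        rw [dist_zero_right, hlam_apply, hnorm_smul s hs]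
      rw [hdist] at hd
      have htri : ‖iteratedFDeriv ℝ 2 (g ℓ) (lam s)‖ - ‖iteratedFDeriv ℝ 2 (g ℓ) 0‖
          ≤ dist (iteratedFDeriv ℝ 2 (g ℓ) (lam s)) (iteratedFDeriv ℝ 2 (g ℓ) 0) := by
        rw [dist_eq_norm]
        exact norm_sub_norm_le _ _
      rw [hA_def]
      have : (δ.toNNReal : ℝ) = δ' := rfl
      rw [this] at hd
      linarith
    linarith
  -- first derivative bound
  have hG'bound : ∀ ℓ (t : ℝ), 1 ≤ t →
      |deriv ((g ℓ) ∘ lam) t| ≤ 2 + (A ℓ + (C ℓ : ℝ) * (t+1) ^ δ') := by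
    intro ℓ t ht
    obtain ⟨ξ, hξ, hξ_eq⟩ := exists_deriv_eq_slope ((g ℓ) ∘ lam) (show t < t+1 by linarith)
      ((hGdiffable ℓ).continuous.continuousOn) ((hGdiffable ℓ).differentiableOn)
    have hξd : |deriv ((g ℓ) ∘ lam) ξ| ≤ 2 := by
      rw [hξ_eq]
      have h1 : t + 1 - t = 1 := by ring
      rw [h1, div_one]
      have h2 := hG1 ℓ (t+1)
      have h3 := hG1 ℓ t
      have h4 : ((g ℓ) ∘ lam) (t+1) = g ℓ (lam (t+1)) := rfl
      have h5 : ((g ℓ) ∘ lam) t = g ℓ (lam t) := rfl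
      rw [h4, h5]
      calc |g ℓ (lam (t+1)) - g ℓ (lam t)| ≤ |g ℓ (lam (t+1))| + |g ℓ (lam t)| :=
            abs_sub _ _
      _ ≤ 2 := by linarith
    obtain ⟨ζ, hζ, hζ_eq⟩ := exists_deriv_eq_slope (deriv ((g ℓ) ∘ lam)) hξ.1
      ((hG'sm ℓ).continuous.continuousOn) ((hG'diffable ℓ).differentiableOn)
    have hξt : ξ - t ≠ 0 := sub_ne_zero.2 (ne_of_gt hξ.1)
    have hrec : deriv ((g ℓ) ∘ lam) ξ - deriv ((g ℓ) ∘ lam) t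
        = deriv (deriv ((g ℓ) ∘ lam)) ζ * (ξ - t) := by
      rw [hζ_eq]
      field_simp
    have hζbound : |deriv (deriv ((g ℓ) ∘ lam)) ζ| ≤ A ℓ + (C ℓ : ℝ) * (t+1) ^ δ' := by
      have h1 := hG''bound ℓ ζ (by linarith [hζ.1] : (0:ℝ) ≤ ζ)
      have h2 : ζ ^ δ' ≤ (t+1) ^ δ' := by
        apply Real.rpow_le_rpow (by linarith [hζ.1]) _ hδ'0
        have := hζ.2
        have := hξ.2
        linarith
      have h3 : (0:ℝ) ≤ (C ℓ : ℝ) := NNReal.coe_nonneg _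
      nlinarith
    have hdiff : |ξ - t| ≤ 1 := by
      rw [abs_of_pos (sub_pos.2 hξ.1)]
      have := hξ.2
      linarith
    have h6 : |deriv ((g ℓ) ∘ lam) t|
        ≤ |deriv ((g ℓ) ∘ lam) ξ| + |deriv (deriv ((g ℓ) ∘ lam)) ζ * (ξ - t)| := by
      have : deriv ((g ℓ) ∘ lam) t
          = deriv ((g ℓ) ∘ lam) ξ - deriv (deriv ((g ℓ) ∘ lam)) ζ * (ξ - t) := by
        rw [← hrec]; ring
      rw [this]
      exact abs_sub _ _
    have h7 : |deriv (deriv ((g ℓ) ∘ lam)) ζ * (ξ - t)|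
        ≤ A ℓ + (C ℓ : ℝ) * (t+1) ^ δ' := by
      rw [abs_mul]
      have h8 : (0:ℝ) ≤ |deriv (deriv ((g ℓ) ∘ lam)) ζ| := abs_nonneg _
      nlinarith [abs_nonneg (ξ - t)]
    linarith
  -- upper bound on deriv F
  have hFup : ∀ t : ℝ, 1 ≤ t → deriv F t ≤ α + β * (t+1) ^ δ' := by
    intro t ht
    have hFeq : F = fun s => ∑ ℓ, (g ℓ (lam s))^2 := by
      funext s
      show ff n (s • e) = ∑ ℓ, (g ℓ (lam s))^2
      rw [← hlam_apply s, hsum (lam s)]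
    have hH : HasDerivAt F (∑ ℓ, ((2:ℝ) * (g ℓ (lam t))^1 * deriv ((g ℓ) ∘ lam) t)) t := by
      rw [hFeq]
      apply HasDerivAt.fun_sum
      intro ℓ _
      have h1 : HasDerivAt ((g ℓ) ∘ lam) (deriv ((g ℓ) ∘ lam) t) t :=
        ((hGdiffable ℓ) t).hasDerivAt
      exact h1.pow 2
    rw [hH.deriv]
    have hterm : ∀ ℓ : Fin N, |(2:ℝ) * (g ℓ (lam t))^1 * deriv ((g ℓ) ∘ lam) t|
        ≤ 2*(2 + A ℓ) + (2*(C ℓ : ℝ)) * (t+1) ^ δ' := by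
      intro ℓ
      rw [abs_mul, abs_mul, pow_one]
      have h1 := hG1 ℓ t
      have h2 := hG'bound ℓ t ht
      have h3 : |(2:ℝ)| = 2 := by norm_num
      rw [h3]
      have h4 : (0:ℝ) ≤ (C ℓ : ℝ) := NNReal.coe_nonneg _
      have h5 : (0:ℝ) ≤ A ℓ := norm_nonneg _
      have h6 : (0:ℝ) ≤ (t+1) ^ δ' := Real.rpow_nonneg (by linarith) _
      nlinarith [abs_nonneg (g ℓ (lam t)), abs_nonneg (deriv ((g ℓ) ∘ lam) t)]
    calc ∑ ℓ, ((2:ℝ) * (g ℓ (lam t))^1 * deriv ((g ℓ) ∘ lam) t)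
        ≤ |∑ ℓ, ((2:ℝ) * (g ℓ (lam t))^1 * deriv ((g ℓ) ∘ lam) t)| := le_abs_self _
    _ ≤ ∑ ℓ, |(2:ℝ) * (g ℓ (lam t))^1 * deriv ((g ℓ) ∘ lam) t| :=
        Finset.abs_sum_le_sum_abs _ _
    _ ≤ ∑ ℓ, (2*(2 + A ℓ) + (2*(C ℓ : ℝ)) * (t+1) ^ δ') :=
        Finset.sum_le_sum (fun ℓ _ => hterm ℓ)
    _ = α + β * (t+1) ^ δ' := by
        rw [Finset.sum_add_distrib, ← Finset.sum_mul]
  -- lower bound: spikes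
  have hFlow : ∀ m : ℕ, ∃ t : ℝ, 1 ≤ t ∧ t + 1 ≤ (m:ℝ)+3 ∧
      Real.exp ((((m:ℝ)+1)^2) - 1) ≤ deriv F t := by
    intro m
    set p : ℝ := (m:ℝ)+1 with hp_def
    set η : ℝ := (cc m)⁻¹ with hη_def
    have hm0 : (0:ℝ) ≤ (m:ℝ) := Nat.cast_nonneg m
    have hp1 : 1 ≤ p := by rw [hp_def]; linarith
    have hccpos := cc_pos m
    have hη0 : 0 < η := by rw [hη_def]; positivity
    have hcc1 : (1:ℝ) ≤ cc m := by
      rw [cc]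
      have h1 : (1:ℝ) ≤ 2^(m+3) := one_le_pow₀ (by norm_num)
      have h2 : (1:ℝ) ≤ Real.exp (((m:ℝ)+1)^2) := Real.one_le_exp (by positivity)
      nlinarith
    have hη1 : η ≤ 1 := by
      rw [hη_def]
      exact inv_le_one_of_one_le₀ hcc1
    set q : ℝ := Real.sqrt (p^2 + η) with hq_def
    have hq0 : 0 ≤ q := Real.sqrt_nonneg _
    have hq2 : q^2 = p^2 + η := Real.sq_sqrt (by positivity)
    have hpq : p < q := by nlinarith
    have hqle : q ≤ p + η := by nlinarith
    -- values of F
    have hf0mono : f0 n (p • e) ≤ f0 n (q • e) := by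
      rw [he_def, f0_single n i0 (by linarith : (0:ℝ) ≤ p),
        f0_single n i0 (by linarith : (0:ℝ) ≤ q)]
      have := E_mono (le_of_lt hpq)
      have h4n : (0:ℝ) < 4*n := by
        have : (1:ℝ) ≤ (n:ℝ) := by exact_mod_cast hn0
        linarith
      exact (div_le_div_iff_of_pos_right h4n).2 this
    have hvmq : vm n m (q • e) = eps m * Real.exp (-1) := by
      rw [vm, hnorm_smul q hq0, hq2]
      have harg : cc m * (p^2 + η - ((m:ℝ)+1)^2) = 1 := by
        rw [hp_def, hη_def]
        field_simp
        ring
      rw [harg, E_one]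
    have hvmp : vm n m (p • e) = 0 := by
      rw [vm, hnorm_smul p (by linarith), hp_def]
      simp [expNegInvGlue.zero]
    have hsummable_ite : Summable (fun m' : ℕ => if m' = m then eps m * Real.exp (-1) else 0) :=
      summable_of_ne_finset_zero (s := {m}) (fun m' hm' => by
        simp only [Finset.mem_singleton] at hm'
        simp [hm'])
    have hvv : vv n (p • e) + eps m * Real.exp (-1) ≤ vv n (q • e) := by
      have hterm : ∀ m' : ℕ, vm n m' (p • e) + (if m' = m then eps m * Real.exp (-1) else 0)
          ≤ vm n m' (q • e) := by
        intro m'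
        by_cases hmm : m' = m
        · subst hmm
          rw [hvmp, hvmq]
          simp
        · rw [if_neg hmm, add_zero]
          apply vm_mono
          rw [hnorm_smul p (by linarith), hnorm_smul q hq0]
          linarith
      have h1 : vv n (p • e) + eps m * Real.exp (-1)
          = ∑' m', (vm n m' (p • e) + (if m' = m then eps m * Real.exp (-1) else 0)) := by
        rw [Summable.tsum_add (vm_summable n _) hsummable_ite, tsum_ite_eq]
        rfl
      rw [h1, vv]
      exact Summable.tsum_le_tsum hterm ((vm_summable n _).add hsummable_ite) (vm_summable n _)
    have hFq : eps m * Real.exp (-1) ≤ F q - F p := by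
      have h1 : ff n (q • e) = f0 n (q • e) + vv n (q • e) := rfl
      have h2 : ff n (p • e) = f0 n (p • e) + vv n (p • e) := rfl
      show eps m * Real.exp (-1) ≤ ff n (q • e) - ff n (p • e)
      rw [h1, h2]
      linarith
    obtain ⟨t, ht, ht_eq⟩ := exists_deriv_eq_slope F hpq
      (hFsm.continuous.continuousOn) (hFdiffable.differentiableOn)
    refine ⟨t, by linarith [ht.1], by linarith [ht.2, hqle, hη1], ?_⟩
    rw [ht_eq]
    have hqp0 : 0 < q - p := sub_pos.2 hpq
    have hqpη : q - p ≤ η := by linarith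
    have hnum : 0 ≤ eps m * Real.exp (-1) := mul_nonneg (eps_pos m).le (Real.exp_pos _).le
    calc Real.exp ((((m:ℝ)+1)^2) - 1) = (eps m * Real.exp (-1)) / η := by
          rw [hη_def, div_eq_mul_inv, inv_inv, mul_comm (eps m) (Real.exp (-1)), mul_assoc,
            eps_mul_cc, ← Real.exp_add]
          congr 1
          ring
    _ ≤ (eps m * Real.exp (-1)) / (q - p) :=
        div_le_div_of_nonneg_left hnum hqp0 hqpη
    _ ≤ (F q - F p) / (q - p) := (div_le_div_iff_of_pos_right hqp0).2 hFq
  -- final contradiction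
  have hkey : ∀ m : ℕ, (((m:ℝ)+1)^2) - 1 ≤ Real.log (α + β + 1) + δ' * ((m:ℝ)+2) := by
    intro m
    obtain ⟨t, ht1, ht2, ht3⟩ := hFlow m
    have h1 : deriv F t ≤ α + β * (t+1) ^ δ' := hFup t ht1
    have h2 : (t+1) ^ δ' ≤ ((m:ℝ)+3) ^ δ' :=
      Real.rpow_le_rpow (by linarith) ht2 hδ'0
    have hm3 : (0:ℝ) < (m:ℝ)+3 := by positivity
    have h3 : ((m:ℝ)+3) ^ δ' = Real.exp (Real.log ((m:ℝ)+3) * δ') :=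
      Real.rpow_def_of_pos hm3 _
    have h4 : Real.log ((m:ℝ)+3) ≤ (m:ℝ)+2 := by
      have := Real.log_le_sub_one_of_pos hm3
      linarith
    have h5 : ((m:ℝ)+3) ^ δ' ≤ Real.exp (δ' * ((m:ℝ)+2)) := by
      rw [h3]
      apply Real.exp_le_exp.2
      have h6 : Real.log ((m:ℝ)+3) * δ' ≤ ((m:ℝ)+2) * δ' :=
        mul_le_mul_of_nonneg_right h4 hδ'0
      linarith [h6, mul_comm δ' ((m:ℝ)+2)]
    have h7 : (1:ℝ) ≤ Real.exp (δ' * ((m:ℝ)+2)) := Real.one_le_exp (by positivity)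
    have h8 : Real.exp ((((m:ℝ)+1)^2) - 1) ≤ (α + β + 1) * Real.exp (δ' * ((m:ℝ)+2)) := by
      have h9 : β * (t+1) ^ δ' ≤ β * Real.exp (δ' * ((m:ℝ)+2)) := by
        apply mul_le_mul_of_nonneg_left _ hβ0
        exact h2.trans h5
      nlinarith [ht3, h1]
    have h10 : (0:ℝ) < α + β + 1 := by linarith
    have h11 : (α + β + 1) * Real.exp (δ' * ((m:ℝ)+2))
        = Real.exp (Real.log (α + β + 1) + δ' * ((m:ℝ)+2)) := by
      rw [Real.exp_add, Real.exp_log h10]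
    rw [h11] at h8
    exact Real.exp_le_exp.1 h8
  obtain ⟨m, hm⟩ := exists_nat_gt (Real.log (α + β + 1) + 3*δ' + 3)
  have hL : 0 ≤ Real.log (α + β + 1) := Real.log_nonneg (by linarith)
  have := hkey m
  nlinarith [this, hm, hL, hδ'0]
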